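/- Let G be a framework for a matroid M and let e ∈ E(M). Then (a) G − e is a framework for M \ e; (b) if e is not a loop-edge of G, then G/e is a framework for M/e; and (c) if e is a loop-edge of G at a vertex v with no other loop-edge at v, and e is not a loop of M, then G∘e is a framework for M/e. -/

import Mathlib

open Set Matroid
open scoped Classical

namespace QuasiGraphicPaper

universe u v

/-- A finite multigraph: a set `V` of vertices (in an ambient type `α`), a set `E` of
edges (in an ambient type `β`), and an incidence function assigning to each edge an
unordered pair of endpoints; loop-edges and parallel edges are allowed. -/
structure Graph (α : Type u) (β : Type v) where
  V : Set α
  E : Set β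
  ends : β → Sym2 α
  finV : V.Finite
  finE : E.Finite
  ends_mem : ∀ ⦃e⦄, e ∈ E → ∀ ⦃x⦄, x ∈ ends e → x ∈ V

namespace Graph

variable {α : Type u} {β : Type v}

/-- `e` is a loop-edge of `G` at the vertex `v`. -/
def IsLoopAt (G : Graph α β) (e : β) (v : α) : Prop :=
  e ∈ G.E ∧ G.ends e = Sym2.diag v

/-- `loops_G(v)`: the set of loop-edges of `G` at `v`. -/
def loopsAt (G : Graph α β) (v : α) : Set β := {e | G.IsLoopAt e v}

/-- Two vertices are adjacent if some edge of `G` has them as its two endpoints. -/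
def Adj (G : Graph α β) (u v : α) : Prop := ∃ e ∈ G.E, G.ends e = s(u, v)

/-- A graph is connected if any two of its vertices are joined by a walk.
(The graph with no vertices is connected.) -/
def Connected (G : Graph α β) : Prop :=
  ∀ u ∈ G.V, ∀ v ∈ G.V, Relation.ReflTransGen G.Adj u v

/-- Delete a set `X` of vertices: remove the vertices in `X` and all edges meeting `X`. -/
def deleteVertices (G : Graph α β) (X : Set α) : Graph α β where
  V := G.V \ X
  E := {e ∈ G.E | ∀ x ∈ G.ends e, x ∉ X}
  ends := G.ends
  finV := G.finV.sdiff (t := X)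
  finE := G.finE.subset (sep_subset _ _)
  ends_mem := fun e he x hx => ⟨G.ends_mem he.1 hx, he.2 x hx⟩

/-- `G − v`: delete the single vertex `v`. -/
abbrev deleteVertex (G : Graph α β) (v : α) : Graph α β := G.deleteVertices {v}

/-- `G − e`: delete the edge `e` (keeping all vertices). -/
def deleteEdge (G : Graph α β) (e : β) : Graph α β where
  V := G.V
  E := G.E \ {e}
  ends := G.ends
  finV := G.finV
  finE := G.finE.sdiff
  ends_mem := fun f hf x hx => G.ends_mem hf.1 hx

/-- `G[X]`: the subgraph of `G` with edge set `X` (intersected with `E(G)`) and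
no isolated vertices. -/
def restrictEdges (G : Graph α β) (X : Set β) : Graph α β where
  V := {v | ∃ e ∈ X ∩ G.E, v ∈ G.ends e}
  E := X ∩ G.E
  ends := G.ends
  finV := G.finV.subset (by rintro v ⟨e, ⟨-, he⟩, hv⟩; exact G.ends_mem he hv)
  finE := G.finE.subset inter_subset_right
  ends_mem := fun e he x hx => ⟨e, he, hx⟩

/-- The connected component of `G` containing the vertex `v`, as a graph. -/
def componentOf (G : Graph α β) (v : α) : Graph α β where
  V := {u ∈ G.V | Relation.ReflTransGen G.Adj v u}
  E := {e ∈ G.E | ∀ x ∈ G.ends e, Relation.ReflTransGen G.Adj v x}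
  ends := G.ends
  finV := G.finV.subset (sep_subset _ _)
  finE := G.finE.subset (sep_subset _ _)
  ends_mem := fun e he x hx => ⟨G.ends_mem he.1 hx, he.2 x hx⟩

/-- `H` is a connected component of `G`. -/
def IsComponentOf (H G : Graph α β) : Prop := ∃ v ∈ G.V, H = G.componentOf v

/-- The number of connected components of `G`. -/
noncomputable def ncomponents (G : Graph α β) : ℕ :=
  {H : Graph α β | H.IsComponentOf G}.ncard

/-- `G` has at most two connected components: among any three vertices, two are joined. -/
def AtMostTwoComponents (G : Graph α β) : Prop :=
  ∀ u ∈ G.V, ∀ v ∈ G.V, ∀ w ∈ G.V,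
    Relation.ReflTransGen G.Adj u v ∨ Relation.ReflTransGen G.Adj u w ∨
      Relation.ReflTransGen G.Adj v w

/-- The degree of a vertex: loop-edges count twice. -/
noncomputable def degree (G : Graph α β) (v : α) : ℕ :=
  ({e ∈ G.E | v ∈ G.ends e ∧ ¬ (G.ends e).IsDiag}).ncard +
    2 * ({e ∈ G.E | G.ends e = Sym2.diag v}).ncard

/-- `G` is a cycle: it is connected, has at least one edge, and every vertex has
degree two. -/
def IsCycleGraph (G : Graph α β) : Prop :=
  G.E.Nonempty ∧ G.Connected ∧ ∀ v ∈ G.V, G.degree v = 2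

/-- `C` is (the edge set of) a cycle of `G`. -/
def CycleSet (G : Graph α β) (C : Set β) : Prop :=
  C ⊆ G.E ∧ (G.restrictEdges C).IsCycleGraph

/-- A forest: a graph with no cycles (in particular no loop-edges). -/
def IsForest (G : Graph α β) : Prop := ∀ C, ¬ G.CycleSet C

/-- `H` is a subgraph of `G`. -/
def IsSubgraph (H G : Graph α β) : Prop := H.V ⊆ G.V ∧ H.E ⊆ G.E ∧ H.ends = G.ends

/-- `G` is `k`-connected if `G − X` is connected for every vertex set `X` with `|X| < k`. -/
def KConnected (G : Graph α β) (k : ℕ) : Prop :=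
  ∀ X : Set α, X.encard < k → (G.deleteVertices X).Connected

/-- A theta: a `2`-connected graph with exactly two vertices of degree three, all
other vertices having degree two. -/
def IsTheta (H : Graph α β) : Prop :=
  H.KConnected 2 ∧
    ∃ a ∈ H.V, ∃ b ∈ H.V, a ≠ b ∧ H.degree a = 3 ∧ H.degree b = 3 ∧
      ∀ v ∈ H.V, v ≠ a → v ≠ b → H.degree v = 2

/-- `G / e`: contract the non-loop edge `e` with endpoints `x` and `y`
(identifying `y` with `x` and deleting `e`). -/
noncomputable def contractEdge (G : Graph α β) (e : β) (x y : α) (he : e ∈ G.E)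
    (hxy : G.ends e = s(x, y)) (hne : x ≠ y) : Graph α β where
  V := G.V \ {y}
  E := G.E \ {e}
  ends := fun f => (G.ends f).map (fun w => if w = y then x else w)
  finV := G.finV.sdiff
  finE := G.finE.sdiff
  ends_mem := by
    rintro f ⟨hf, -⟩ z hz
    try dsimp only at hz
    rw [Sym2.mem_map] at hz
    obtain ⟨w, hw, rfl⟩ := hz
    by_cases hwy : w = y
    · rw [if_pos hwy]
      have hx : x ∈ G.ends e := by rw [hxy]; exact Sym2.mem_mk_left x y
      exact ⟨G.ends_mem he hx, by simp [hne]⟩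
    · rw [if_neg hwy]
      exact ⟨G.ends_mem hf hw, by simp [hwy]⟩

/-- `G ∘ e`: for a loop-edge `e` at a vertex `v` which is the unique loop-edge at `v`,
delete `v` and `e`, and replace every other edge `f = vw` at `v` by a loop-edge at `w`. -/
noncomputable def circ (G : Graph α β) (e : β) (v : α)
    (hno : ∀ f ∈ G.E, G.ends f = Sym2.diag v → f = e) : Graph α β where
  V := G.V \ {v}
  E := G.E \ {e}
  ends := fun f =>
    if h : f ∈ G.E ∧ f ≠ e ∧ v ∈ G.ends f then Sym2.diag (Sym2.Mem.other h.2.2)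
    else G.ends f
  finV := G.finV.sdiff
  finE := G.finE.sdiff
  ends_mem := by
    rintro f ⟨hf, hfe⟩ z hz
    try dsimp only at hz
    have hfe' : f ≠ e := fun h' => hfe (by simp [h'])
    by_cases h : f ∈ G.E ∧ f ≠ e ∧ v ∈ G.ends f
    · rw [dif_pos h] at hz
      have hze : z = Sym2.Mem.other h.2.2 := by
        have h2 : z ∈ s(Sym2.Mem.other h.2.2, Sym2.Mem.other h.2.2) := hz
        rw [Sym2.mem_iff] at h2
        tauto
      subst hze
      refine ⟨G.ends_mem hf (Sym2.other_mem h.2.2), ?_⟩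
      simp only [mem_singleton_iff]
      intro hzv
      apply h.2.1
      apply hno f hf
      show G.ends f = s(v, v)
      rw [← Sym2.other_spec h.2.2, hzv]
    · rw [dif_neg h] at hz
      refine ⟨G.ends_mem hf hz, ?_⟩
      simp only [mem_singleton_iff]
      intro hzv
      subst hzv
      exact h ⟨hf, hfe', hz⟩

end Graph

/-! ### Matroid notions -/

variable {α : Type u} {β : Type v}

/-- The rank `r_M(X)` of a set `X` in a matroid `M`: the maximum size of an
independent subset of `X`. -/
noncomputable def rank (M : Matroid β) (X : Set β) : ℕ :=
  (⨆ I ∈ {I : Set β | M.Indep I ∧ I ⊆ X}, I.encard).toNat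

/-- `C` is a circuit of `M` : a minimal dependent set. -/
def IsCircuit (M : Matroid β) (C : Set β) : Prop :=
  M.Dep C ∧ ∀ D, D ⊂ C → M.Indep D

/-- `M \ D` : delete the set `D` from the matroid `M`. -/
def deleteM (M : Matroid β) (D : Set β) : Matroid β := M ↾ (M.E \ D)

/-- `M / C` : contract the set `C` in the matroid `M`. -/
def contractM (M : Matroid β) (C : Set β) : Matroid β := (M✶ ↾ (M✶.E \ C))✶

/-- `G` is a weak framework for `M`: conditions (1)–(3). -/
def WeakFramework (G : Graph α β) (M : Matroid β) : Prop :=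
  G.E = M.E ∧
  (∀ H : Graph α β, H.IsComponentOf G → rank M H.E ≤ H.V.ncard) ∧
  (∀ v ∈ G.V,
    M.closure (G.deleteVertex v).E ⊆ (G.deleteVertex v).E ∪ G.loopsAt v)

/-- `G` is a framework for `M`: conditions (1)–(4). -/
def Framework (G : Graph α β) (M : Matroid β) : Prop :=
  WeakFramework G M ∧
    ∀ C, IsCircuit M C → (G.restrictEdges C).AtMostTwoComponents

/-- `M` is the cycle matroid `M(G)` of `G` : the ground set of `M` is `E(G)`, and the
circuits of `M` are exactly the edge sets of cycles of `G`. -/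
def IsCycleMatroidOf (G : Graph α β) (M : Matroid β) : Prop :=
  M.E = G.E ∧ ∀ C, IsCircuit M C ↔ G.CycleSet C

/-- A matroid is graphic if it is the cycle matroid of some graph. -/
def Graphic (M : Matroid β) : Prop :=
  ∃ (γ : Type v) (G : Graph γ β), IsCycleMatroidOf G M

/-- A matroid is quasi-graphic if it has a framework. -/
def QuasiGraphic (M : Matroid β) : Prop :=
  ∃ (γ : Type v) (G : Graph γ β), Framework G M

/-- `M` is a lift of `N` if some single-element extension `M'` of `M` satisfies
`M' \ e = M` and `M' / e = N`. -/
def IsLiftOf (M N : Matroid β) : Prop :=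
  ∃ M' : Matroid (Option β), (none : Option β) ∈ M'.E ∧
    deleteM M' {none} = M.map some (Option.some_injective β).injOn ∧
    contractM M' {none} = N.map some (Option.some_injective β).injOn

/-- `M` is a lifted-graphic matroid: for some single-element extension `M'` of `M`,
`M' / e` is graphic. -/
def LiftedGraphic (M : Matroid β) : Prop :=
  ∃ M' : Matroid (Option β), (none : Option β) ∈ M'.E ∧
    deleteM M' {none} = M.map some (Option.some_injective β).injOn ∧
    Graphic (contractM M' {none})

/-- `(M, V)` is a framed matroid: `V` is a basis of `M` and every element of `M` is
spanned by a subset of `V` with at most two elements. -/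
def FramedMatroid {γ : Type u} (M : Matroid γ) (V : Set γ) : Prop :=
  M.IsBase V ∧ ∀ e ∈ M.E, ∃ S ⊆ V, S.ncard ≤ 2 ∧ e ∈ M.closure S

/-- `M` is a frame matroid: `M = M' \ V` for some framed matroid `(M', V)`. -/
def FrameMatroid (M : Matroid β) : Prop :=
  ∃ (γ : Type v) (M' : Matroid (β ⊕ γ)) (V : Set (β ⊕ γ)),
    FramedMatroid M' V ∧
      deleteM M' V = M.map Sum.inl Sum.inl_injective.injOn

/-- `M` is `3`-connected: it has no `k`-separation for `k ≤ 2`. -/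
def ThreeConnected (M : Matroid β) : Prop :=
  ∀ X ⊆ M.E, ∀ k : ℕ, k ≤ 2 → (k : ℕ∞) ≤ X.encard → (k : ℕ∞) ≤ (M.E \ X).encard →
    rank M M.E + k ≤ rank M X + rank M (M.E \ X)

/-- `M` is representable over some field. -/
def Representable (M : Matroid β) : Prop :=
  ∃ (F : Type v) (_ : Field F) (W : Type v) (_ : AddCommGroup W) (_ : Module F W)
    (φ : β → W), ∀ I ⊆ M.E, (M.Indep I ↔ LinearIndependent F (fun x : I => φ x))

/-- A collection `B` of cycles of `G` satisfies the theta-property if there is no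
theta-subgraph of `G` with exactly two of its three cycles in `B`. -/
def ThetaProperty (G : Graph α β) (B : Set (Set β)) : Prop :=
  ∀ H : Graph α β, H.IsSubgraph G → H.IsTheta →
    ∀ C1 C2 C3, H.CycleSet C1 → H.CycleSet C2 → H.CycleSet C3 →
      C1 ≠ C2 → C2 ≠ C3 → C1 ≠ C3 → C1 ∈ B → C2 ∈ B → C3 ∈ B
/-! Everything rests on one consequence of framework condition (3): an edge `uw` with `w ≠ u`
is not spanned by edges avoiding `u`. So deleting the edges at a vertex that still has an edge
leading out of the deleted part lowers the rank by one, and peeling a component of `G` down to a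
nonempty vertex set `T` in this way shows that the edges with all ends in `T` have rank at most
`|T|`. This gives condition (2) for `G − e`, `G / e` and `G ∘ e`; for the last two, contracting `e`
pays for the vertex that disappears.

A circuit of `M / e` extends to a circuit of `M` by at most `e`, and the components of the latter
map onto those of the former, which gives condition (4), except for a circuit `C` of `M / e` with
an edge at the vertex `v` of `G ∘ e`. There, peeling the component of `(G ∘ e)[C]` next to `v` off
`C + e`, and the rank bound on that component together with `v`, give opposite inequalities unless
the component carries all of `C`; so `(G ∘ e)[C]` is connected. -/

section Relation

variable {α : Type*} {r : α → α → Prop}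

lemma exists_rel_of_reflTransGen_of_mem_of_notMem {U : Set α} {a b : α}
    (h : Relation.ReflTransGen r a b) (ha : a ∈ U) (hb : b ∉ U) :
    ∃ c ∈ U, ∃ d ∉ U, r c d := by
  induction h with
  | refl => exact absurd ha hb
  | @tail c d _ hcd ih =>
    by_cases hc : c ∈ U
    · exact ⟨c, hc, d, hb, hcd⟩
    · exact ih hc

end Relation

lemma mem_diag_iff {α : Type*} {x v : α} : x ∈ Sym2.diag v ↔ x = v := by
  simp [Sym2.diag, Sym2.mem_iff]

lemma eq_other_of_mem {α : Type*} {z : Sym2 α} {u v : α} (hv : v ∈ z) (hu : u ∈ z)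
    (huv : u ≠ v) : u = Sym2.Mem.other hv := by
  rw [← Sym2.other_spec hv, Sym2.mem_iff] at hu
  exact hu.resolve_left huv

lemma eq_of_mk_eq_diag {α : Type*} {a b w : α} (h : s(a, b) = Sym2.diag w) : a = b := by
  have ha : a ∈ Sym2.diag w := h ▸ Sym2.mem_mk_left a b
  have hb : b ∈ Sym2.diag w := h ▸ Sym2.mem_mk_right a b
  rw [mem_diag_iff] at ha hb
  exact ha.trans hb.symm

lemma map_eq_diag_of_forall_mem {α : Type*} {σ : α → α} {z : Sym2 α} {x : α}
    (h : ∀ w ∈ z, σ w = x) : z.map σ = Sym2.diag x := by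
  induction z using Sym2.ind with
  | h p q => rw [Sym2.map_mk, h p (Sym2.mem_mk_left p q), h q (Sym2.mem_mk_right p q)]; rfl

namespace Graph

variable {α : Type u} {β : Type v} {G : Graph α β} {a b r : α} {f : β}

def edgesIn (G : Graph α β) (T : Set α) : Set β := {f ∈ G.E | ∀ x ∈ G.ends f, x ∈ T}

lemma Adj.symm (h : G.Adj a b) : G.Adj b a := by
  obtain ⟨f, hf, hends⟩ := h
  exact ⟨f, hf, hends.trans Sym2.eq_swap⟩

lemma reach_symm (h : Relation.ReflTransGen G.Adj a b) : Relation.ReflTransGen G.Adj b a := by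
  induction h with
  | refl => exact .refl
  | tail _ hcd ih => exact ih.head hcd.symm

lemma reach_of_mem_ends (hf : f ∈ G.E) (ha : a ∈ G.ends f) (hb : b ∈ G.ends f) :
    Relation.ReflTransGen G.Adj a b := by
  by_cases hab : a = b
  · exact hab ▸ .refl
  · exact .single ⟨f, hf, (Sym2.mem_and_mem_iff hab).1 ⟨ha, hb⟩⟩

lemma restrictEdges_V_subset (X : Set β) : (G.restrictEdges X).V ⊆ G.V :=
  fun _ ⟨_, hf, hx⟩ => G.ends_mem hf.2 hx

lemma mem_V_of_reach (h : Relation.ReflTransGen G.Adj a b) (ha : a ∈ G.V) : b ∈ G.V := by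
  induction h with
  | refl => exact ha
  | tail _ hcd _ =>
    obtain ⟨f, hf, hends⟩ := hcd
    exact G.ends_mem hf (hends ▸ Sym2.mem_mk_right _ _)

lemma mem_V_of_reach_of_ne (h : Relation.ReflTransGen G.Adj a b) (hab : a ≠ b) : a ∈ G.V := by
  obtain ⟨c, ⟨f, hf, hends⟩, -⟩ := h.cases_head.resolve_left hab
  exact G.ends_mem hf (hends ▸ Sym2.mem_mk_left a c)

lemma reach_restrictEdges_mono {X Y : Set β} (hXY : X ⊆ Y)
    (h : Relation.ReflTransGen (G.restrictEdges X).Adj a b) :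
    Relation.ReflTransGen (G.restrictEdges Y).Adj a b :=
  Relation.ReflTransGen.mono (fun _ _ ⟨f, hf, hends⟩ => ⟨f, ⟨hXY hf.1, hf.2⟩, hends⟩) _ _ h

lemma reach_of_reach_restrictEdges {X : Set β}
    (h : Relation.ReflTransGen (G.restrictEdges X).Adj a b) : Relation.ReflTransGen G.Adj a b :=
  Relation.ReflTransGen.mono (fun _ _ ⟨f, hf, hends⟩ => ⟨f, hf.2, hends⟩) _ _ h

lemma componentOf_E_subset_edgesIn : (G.componentOf r).E ⊆ G.edgesIn (G.componentOf r).V :=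
  fun _ hf => ⟨hf.1, fun x hx => ⟨G.ends_mem hf.1 hx, hf.2 x hx⟩⟩

lemma componentOf_V_subset {G' : Graph α β} (hV : G'.V ⊆ G.V)
    (hadj : ∀ a b, G'.Adj a b → Relation.ReflTransGen G.Adj a b) :
    (G'.componentOf r).V ⊆ (G.componentOf r).V :=
  fun _ hu => ⟨hV hu.1, Relation.ReflTransGen.lift' id hadj _ _ hu.2⟩

lemma reach_restrictEdges_componentOf (h : Relation.ReflTransGen G.Adj r a) :
    Relation.ReflTransGen (G.restrictEdges (G.componentOf r).E).Adj r a := by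
  induction h with
  | refl => exact .refl
  | @tail b c hrb hbc ih =>
    obtain ⟨f, hf, hends⟩ := hbc
    have hfK : f ∈ (G.componentOf r).E := ⟨hf, fun x hx => by
      rw [hends, Sym2.mem_iff] at hx
      rcases hx with rfl | rfl
      exacts [hrb, hrb.tail ⟨f, hf, hends⟩]⟩
    exact ih.tail ⟨f, ⟨hfK, hf⟩, hends⟩

lemma AtMostTwoComponents.of_map {H H' : Graph α β} (φ : α → α) (hV : H'.V ⊆ φ '' H.V)
    (hadj : ∀ a b, H.Adj a b → Relation.ReflTransGen H'.Adj (φ a) (φ b))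
    (h : H.AtMostTwoComponents) : H'.AtMostTwoComponents := by
  intro u₁ hu₁ u₂ hu₂ u₃ hu₃
  obtain ⟨w₁, hw₁, rfl⟩ := hV hu₁
  obtain ⟨w₂, hw₂, rfl⟩ := hV hu₂
  obtain ⟨w₃, hw₃, rfl⟩ := hV hu₃
  have hmap := Relation.ReflTransGen.lift' φ hadj
  rcases h w₁ hw₁ w₂ hw₂ w₃ hw₃ with h | h | h
  exacts [.inl (hmap _ _ h), .inr (.inl (hmap _ _ h)), .inr (.inr (hmap _ _ h))]

lemma Connected.atMostTwoComponents (h : G.Connected) : G.AtMostTwoComponents :=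
  fun u hu v hv _ _ => .inl (h u hu v hv)

end Graph

section Rank

variable {β : Type v} {M N : Matroid β} {C I X Y : Set β} {e f : β}

lemma isCircuit_iff_isCircuit : QuasiGraphicPaper.IsCircuit M C ↔ M.IsCircuit C := by
  rw [isCircuit_iff_forall_ssubset]
  exact Iff.rfl

lemma rank_eq_toNat_eRk (M : Matroid β) (X : Set β) : rank M X = (M.eRk X).toNat := by
  rw [rank]
  congr 1
  apply le_antisymm
  · exact iSup₂_le fun I hI => hI.1.encard_le_eRk_of_subset hI.2
  · obtain ⟨I, hI⟩ := M.exists_isBasis' X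
    rw [← hI.encard_eq_eRk]
    exact le_iSup₂_of_le I ⟨hI.indep, hI.subset⟩ le_rfl

lemma rank_eq_ncard_of_isBasis' (hI : M.IsBasis' I X) : rank M X = I.ncard := by
  rw [rank_eq_toNat_eRk, ← hI.encard_eq_eRk, ncard_def]

lemma rank_eq_ncard_of_indep (hI : M.Indep I) : rank M I = I.ncard :=
  rank_eq_ncard_of_isBasis' hI.isBasis_self.isBasis'

lemma ncard_le_rank (hY : Y.Finite) (hI : M.Indep I) (hIY : I ⊆ Y) : I.ncard ≤ rank M Y := by
  obtain ⟨J, hJ, hIJ⟩ := hI.subset_isBasis'_of_subset hIY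
  rw [rank_eq_ncard_of_isBasis' hJ]
  exact ncard_le_ncard hIJ (hY.subset hJ.subset)

lemma rank_mono (hY : Y.Finite) (hXY : X ⊆ Y) : rank M X ≤ rank M Y := by
  obtain ⟨I, hI⟩ := M.exists_isBasis' X
  rw [rank_eq_ncard_of_isBasis' hI]
  exact ncard_le_rank hY hI.indep (hI.subset.trans hXY)

lemma rank_lt_ncard (hX : X.Finite) (hXi : ¬ M.Indep X) : rank M X < X.ncard := by
  obtain ⟨I, hI⟩ := M.exists_isBasis' X
  rw [rank_eq_ncard_of_isBasis' hI]
  exact ncard_lt_ncard (hI.subset.ssubset_of_ne fun h => hXi (h ▸ hI.indep)) hX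

lemma rank_add_one_le (hY : Y.Finite) (hXY : X ⊆ Y) (hfY : f ∈ Y) (hf : f ∈ M.E \ M.closure X) :
    rank M X + 1 ≤ rank M Y := by
  obtain ⟨I, hI⟩ := M.exists_isBasis' X
  have hfI : f ∉ I := fun h => hf.2 (M.mem_closure_of_mem' (hI.subset h) hf.1)
  have hins : M.Indep (insert f I) := by
    rw [hI.indep.insert_indep_iff_of_notMem hfI, hI.closure_eq_closure]
    exact hf
  have := ncard_le_rank hY hins (insert_subset hfY (hI.subset.trans hXY))
  rwa [rank_eq_ncard_of_isBasis' hI,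
    ← ncard_insert_of_notMem hfI ((hY.subset hXY).subset hI.subset)]

lemma rank_le_of_indep_imp (hX : X.Finite) (hNM : ∀ I, N.Indep I → M.Indep I) :
    rank N X ≤ rank M X := by
  obtain ⟨I, hI⟩ := N.exists_isBasis' X
  rw [rank_eq_ncard_of_isBasis' hI]
  exact ncard_le_rank hX (hNM I hI.indep) hI.subset

lemma rank_contractElem_add_one_le (he : M.IsNonloop e) (hX : X.Finite) :
    rank (M ／ {e}) X + 1 ≤ rank M (insert e X) := by
  obtain ⟨I, hI⟩ := (M ／ {e}).exists_isBasis' X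
  obtain ⟨heI, hIe⟩ := he.contractElem_indep_iff.1 hI.indep
  have := ncard_le_rank (hX.insert e) hIe (insert_subset_insert hI.subset)
  rwa [rank_eq_ncard_of_isBasis' hI, ← ncard_insert_of_notMem heI (hX.subset hI.subset)]

end Rank

namespace WeakFramework

variable {α : Type u} {β : Type v} {G : Graph α β} {M N : Matroid β} {X Y : Set β}
  {T U : Set α} {e f g : β} {t u u' w : α}

lemma closure_subset (hG : WeakFramework G M) (hu : u ∈ G.V)
    (hX : X ⊆ (G.deleteVertex u).E) : M.closure X ⊆ (G.deleteVertex u).E ∪ G.loopsAt u :=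
  (M.closure_subset_closure hX).trans (hG.2.2 u hu)

lemma notMem_closure (hG : WeakFramework G M) (hf : f ∈ G.E) (hends : G.ends f = s(u, w))
    (hwu : w ≠ u) (hX : X ⊆ (G.deleteVertex u).E) : f ∉ M.closure X := by
  have hu : u ∈ G.ends f := hends ▸ Sym2.mem_mk_left u w
  intro hcl
  rcases hG.closure_subset (G.ends_mem hf hu) hX hcl with hf' | hf'
  · exact hf'.2 u hu rfl
  · have hw : w ∈ G.ends f := hends ▸ Sym2.mem_mk_right u w
    rw [hf'.2, mem_diag_iff] at hw
    exact hwu hw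

lemma isNonloop_of_ends (hG : WeakFramework G M) (hf : f ∈ G.E) (hends : G.ends f = s(u, w))
    (hwu : w ≠ u) : M.IsNonloop f :=
  isNonloop_iff_mem_compl_loops.2
    ⟨hG.1 ▸ hf, hG.notMem_closure hf hends hwu (empty_subset _)⟩

lemma rank_inter_edgesIn_compl_add_ncard_le (hG : WeakFramework G M) (hY : Y ⊆ G.E)
    (hU : ∀ u ∈ U, ∃ t ∉ U, Relation.ReflTransGen (G.restrictEdges Y).Adj u t) :
    rank M (Y ∩ G.edgesIn Uᶜ) + U.ncard ≤ rank M Y := by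
  have hUV : U ⊆ G.V := fun u hu => by
    obtain ⟨t, ht, hut⟩ := hU u hu
    exact G.restrictEdges_V_subset Y (Graph.mem_V_of_reach_of_ne hut fun h => ht (h ▸ hu))
  have hYfin : Y.Finite := G.finE.subset hY
  obtain ⟨n, hn⟩ : ∃ n, U.ncard = n := ⟨_, rfl⟩
  induction n generalizing U with
  | zero =>
    obtain rfl : U = ∅ := (ncard_eq_zero (G.finV.subset hUV)).1 hn
    rw [ncard_empty, add_zero]
    exact rank_mono hYfin inter_subset_left
  | succ n ih =>
    have hUfin : U.Finite := G.finV.subset hUV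
    obtain ⟨u₀, hu₀⟩ := nonempty_of_ncard_ne_zero (hn.trans_ne n.succ_ne_zero)
    obtain ⟨t, ht, hu₀t⟩ := hU u₀ hu₀
    -- Peel `a` last: its edge `ab` leaving `U` survives peeling `U - a`, and is not spanned by
    -- the edges avoiding `a`.
    obtain ⟨a, ha, b, hb, f, ⟨hfY, hfG⟩, hends⟩ :=
      exists_rel_of_reflTransGen_of_mem_of_notMem hu₀t hu₀ ht
    have hends : G.ends f = s(a, b) := hends
    have hba : b ≠ a := fun h => hb (h ▸ ha)
    have ih' := ih (U := U \ {a})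
      (fun u hu => (hU u hu.1).imp fun t ht => ⟨fun h => ht.1 h.1, ht.2⟩)
      (sdiff_subset.trans hUV) (by rw [← ncard_sdiff_singleton_add_one ha hUfin] at hn; omega)
    have hstrip : Y ∩ G.edgesIn Uᶜ ⊆ Y ∩ G.edgesIn (U \ {a})ᶜ :=
      fun g hg => ⟨hg.1, hg.2.1, fun x hx hxU => hg.2.2 x hx hxU.1⟩
    have hf : f ∈ Y ∩ G.edgesIn (U \ {a})ᶜ := ⟨hfY, hfG, fun x hx hxU => by
      rw [hends, Sym2.mem_iff] at hx
      rcases hx with rfl | rfl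
      exacts [hxU.2 rfl, hb hxU.1]⟩
    have hpeel := rank_add_one_le (hYfin.subset inter_subset_left) hstrip hf
      ⟨hG.1 ▸ hfG, hG.notMem_closure hfG hends hba fun g hg =>
        ⟨hg.2.1, fun x hx hxa => hg.2.2 x hx (by rw [mem_singleton_iff.1 hxa]; exact ha)⟩⟩
    rw [← ncard_sdiff_singleton_add_one ha hUfin]
    omega

lemma rank_edgesIn_le (hG : WeakFramework G M) (ht : t ∈ T) (hT : T ⊆ (G.componentOf t).V) :
    rank M (G.edgesIn T) ≤ T.ncard := by
  set K := G.componentOf t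
  have hpeel := hG.rank_inter_edgesIn_compl_add_ncard_le (Y := K.E) (U := K.V \ T)
    (fun _ hf => hf.1) fun u hu =>
      ⟨t, fun h => h.2 ht, Graph.reach_symm (Graph.reach_restrictEdges_componentOf hu.1.2)⟩
  have hsub : G.edgesIn T ⊆ K.E ∩ G.edgesIn (K.V \ T)ᶜ := fun f hf =>
    ⟨⟨hf.1, fun x hx => (hT (hf.2 x hx)).2⟩, hf.1, fun x hx hxU => hxU.2 (hf.2 x hx)⟩
  have hmono := rank_mono (M := M) (K.finE.subset inter_subset_left) hsub
  have hK := hG.2.1 K ⟨t, (hT ht).1, rfl⟩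
  have hcard := ncard_sdiff_add_ncard_of_subset hT K.finV
  omega

lemma rank_le_ncard_of_subset_edgesIn (hG : WeakFramework G M)
    (hNM : ∀ I, N.Indep I → M.Indep I) (ht : t ∈ T) (hT : T ⊆ (G.componentOf t).V)
    (hX : X ⊆ G.edgesIn T) : rank N X ≤ T.ncard :=
  have hXfin : X.Finite := G.finE.subset fun _ hf => (hX hf).1
  (rank_le_of_indep_imp hXfin hNM).trans <|
    (rank_mono (G.finE.subset fun _ hf => hf.1) hX).trans (hG.rank_edgesIn_le ht hT)

/-- Contracting `e` lowers the rank by one, which pays for the vertex `s`. -/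
lemma rank_contractElem_le_ncard (hG : WeakFramework G M) (he : M.IsNonloop e) {s : α}
    (hsT : s ∉ T) (ht : t ∈ insert s T) (hT : insert s T ⊆ (G.componentOf t).V)
    (hX : insert e X ⊆ G.edgesIn (insert s T)) : rank (M ／ {e}) X ≤ T.ncard := by
  have hXfin : (insert e X).Finite := G.finE.subset fun _ hf => (hX hf).1
  have h₁ := rank_contractElem_add_one_le he (hXfin.subset (subset_insert e X))
  have h₂ := rank_mono (M := M) (G.finE.subset fun _ hf => hf.1) hX
  have h₃ := hG.rank_edgesIn_le ht hT
  rw [ncard_insert_of_notMem hsT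
    ((G.componentOf t).finV.subset (hT.trans' (subset_insert s T)))] at h₃
  omega

lemma closure_union_singleton_subset (hG : WeakFramework G M) {G' : Graph α β}
    (hE : G'.E = G.E \ {e}) (heG : e ∈ G.E) (hu : u ∈ G.V) (heu : u ∉ G.ends e)
    (hmem : ∀ f ∈ G'.E, u ∈ G'.ends f ↔ u ∈ G.ends f)
    (hloop : ∀ f ∈ G'.E, G.ends f = Sym2.diag u → G'.ends f = Sym2.diag u) :
    M.closure ((G'.deleteVertex u).E ∪ {e}) \ {e} ⊆ (G'.deleteVertex u).E ∪ G'.loopsAt u := by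
  rintro g ⟨hg, hge⟩
  have hsub : (G'.deleteVertex u).E ∪ {e} ⊆ (G.deleteVertex u).E := by
    rintro f (⟨hf, hfu⟩ | hfe)
    · refine ⟨(hE ▸ hf).1, fun x hx hxu => hfu u ((hmem f hf).2 ?_) rfl⟩
      rwa [← mem_singleton_iff.1 hxu]
    · rw [mem_singleton_iff.1 hfe]
      exact ⟨heG, fun x hx hxu => heu (mem_singleton_iff.1 hxu ▸ hx)⟩
  have hg' : g ∈ G'.E := hE ▸ ⟨(hG.closure_subset hu hsub hg).elim (·.1) (·.1), hge⟩
  rcases hG.closure_subset hu hsub hg with ⟨-, hgu⟩ | ⟨-, hgl⟩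
  · refine .inl ⟨hg', fun x hx hxu => hgu u ((hmem g hg').1 ?_) rfl⟩
    rwa [← mem_singleton_iff.1 hxu]
  · exact .inr ⟨hg', hloop g hg' hgl⟩

/-- Exchange: if `g` is not spanned by `Y`, then `e` is spanned by `Y + g`, which avoids `u'`. -/
lemma notMem_closure_insert (hG : WeakFramework G M) (heG : e ∈ G.E)
    (he : G.ends e = s(u, u')) (huu' : u ≠ u') (hgG : g ∈ G.E) (hg : G.ends g = s(u, w))
    (hwu : w ≠ u) (hwu' : w ≠ u') (hY : Y ⊆ (G.deleteVertex u).E)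
    (hY' : Y ⊆ (G.deleteVertex u').E) : g ∉ M.closure (insert e Y) := by
  intro hcl
  by_cases hgY : g ∈ M.closure Y
  · exact hG.notMem_closure hgG hg hwu hY hgY
  · refine hG.notMem_closure heG (he.trans Sym2.eq_swap) huu' ?_ (mem_closure_insert hgY hcl)
    refine insert_subset ⟨hgG, fun z hz hzu' => ?_⟩ hY'
    rw [hg, Sym2.mem_iff, mem_singleton_iff.1 hzu'] at hz
    exact hz.elim (fun h => huu' h.symm) (fun h => hwu' h.symm)

end WeakFramework

section DeleteEdge

variable {α : Type u} {β : Type v} {G : Graph α β} {M : Matroid β}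

lemma WeakFramework.deleteEdge (hG : WeakFramework G M) (e : β) :
    WeakFramework (G.deleteEdge e) (M ＼ {e}) := by
  refine ⟨congrArg (· \ ({e} : Set β)) hG.1, ?_, fun v hv g hg => ?_⟩
  · rintro H ⟨r, hr, rfl⟩
    have hHV : ((G.deleteEdge e).componentOf r).V ⊆ (G.componentOf r).V :=
      Graph.componentOf_V_subset subset_rfl fun _ _ ⟨f, hf, hends⟩ => .single ⟨f, hf.1, hends⟩
    exact hG.rank_le_ncard_of_subset_edgesIn (fun _ => Indep.of_delete) ⟨hr, .refl⟩ hHV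
      fun f hf => ⟨hf.1.1, (Graph.componentOf_E_subset_edgesIn hf).2⟩
  · rw [delete_closure_eq] at hg
    have hsub : ((G.deleteEdge e).deleteVertex v).E \ {e} ⊆ (G.deleteVertex v).E :=
      fun f hf => ⟨hf.1.1.1, hf.1.2⟩
    rcases hG.closure_subset hv hsub hg.1 with ⟨hgG, hgv⟩ | ⟨hgG, hgl⟩
    exacts [.inl ⟨⟨hgG, hg.2⟩, hgv⟩, .inr ⟨⟨hgG, hg.2⟩, hgl⟩]

lemma Framework.deleteEdge (hG : Framework G M) (e : β) :
    Framework (G.deleteEdge e) (M ＼ {e}) := by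
  refine ⟨hG.1.deleteEdge e, fun C hC => ?_⟩
  obtain ⟨hC, hCe⟩ := delete_isCircuit_iff.1 (isCircuit_iff_isCircuit.1 hC)
  refine (hG.2 C (isCircuit_iff_isCircuit.2 hC)).of_map id ?_ ?_
  · rintro u ⟨f, hf, hu⟩
    exact ⟨u, ⟨f, ⟨hf.1, hf.2.1⟩, hu⟩, rfl⟩
  · rintro a b ⟨f, hf, hends⟩
    exact .single ⟨f, ⟨hf.1, hf.2, fun h => hCe.notMem_of_mem_left hf.1 h⟩, hends⟩

end DeleteEdge

lemma Graph.ite_eq_of_mem_ends {α : Type u} {β : Type v} {G : Graph α β} {e : β} {x y w : α}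
    (hxy : G.ends e = s(x, y)) (hne : x ≠ y) (hw : w ∈ G.ends e) :
    (if w = y then x else w) = x := by
  rw [hxy, Sym2.mem_iff] at hw
  rcases hw with rfl | rfl
  exacts [if_neg hne, if_pos rfl]

section ContractEdge

variable {α : Type u} {β : Type v} {G : Graph α β} {M : Matroid β} {e : β} {x y : α}
  (heG : e ∈ G.E) (hxy : G.ends e = s(x, y)) (hne : x ≠ y)

lemma Graph.reach_of_contractEdge_adj {a b : α}
    (h : (G.contractEdge e x y heG hxy hne).Adj a b) : Relation.ReflTransGen G.Adj a b := by
  obtain ⟨f, hf, hends⟩ := h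
  have hσ : ∀ w, Relation.ReflTransGen G.Adj (if w = y then x else w) w := fun w => by
    split_ifs with hw
    · exact hw ▸ .single ⟨e, heG, hxy⟩
    · exact .refl
  have ha : a ∈ (G.contractEdge e x y heG hxy hne).ends f := hends ▸ Sym2.mem_mk_left a b
  have hb : b ∈ (G.contractEdge e x y heG hxy hne).ends f := hends ▸ Sym2.mem_mk_right a b
  obtain ⟨p, hp, rfl⟩ := Sym2.mem_map.1 ha
  obtain ⟨q, hq, rfl⟩ := Sym2.mem_map.1 hb
  exact (hσ p).trans ((Graph.reach_of_mem_ends hf.1 hp hq).trans (Graph.reach_symm (hσ q)))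

lemma WeakFramework.closure_contractEdge_deleteVertex_subset (hG : WeakFramework G M) :
    M.closure (((G.contractEdge e x y heG hxy hne).deleteVertex x).E ∪ {e}) \ {e} ⊆
      ((G.contractEdge e x y heG hxy hne).deleteVertex x).E ∪
        (G.contractEdge e x y heG hxy hne).loopsAt x := by
  set G' := G.contractEdge e x y heG hxy hne
  have hσ : ∀ w, w = x ∨ w = y → (if w = y then x else w) = x := by
    rintro w (rfl | rfl)
    exacts [if_neg hne, if_pos rfl]
  have hYx : (G'.deleteVertex x).E ⊆ (G.deleteVertex x).E := fun f hf => ⟨hf.1.1, fun w hw hwx =>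
    hf.2 _ (Sym2.mem_map.2 ⟨w, hw, rfl⟩) (hσ w (.inl (mem_singleton_iff.1 hwx)))⟩
  have hYy : (G'.deleteVertex x).E ⊆ (G.deleteVertex y).E := fun f hf => ⟨hf.1.1, fun w hw hwy =>
    hf.2 _ (Sym2.mem_map.2 ⟨w, hw, rfl⟩) (hσ w (.inr (mem_singleton_iff.1 hwy)))⟩
  rintro g ⟨hg, hge⟩
  have hg' : g ∈ G'.E := ⟨hG.1 ▸ M.closure_subset_ground _ hg, hge⟩
  by_cases hgxy : ∀ w ∈ G.ends g, w = x ∨ w = y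
  · exact .inr ⟨hg', map_eq_diag_of_forall_mem fun w hw => hσ w (hgxy w hw)⟩
  push Not at hgxy
  obtain ⟨w, hw, hwx, hwy⟩ := hgxy
  rw [union_singleton] at hg
  have hx : x ∉ G.ends g := fun hx => hG.notMem_closure_insert heG hxy hne hg'.1
    ((Sym2.mem_and_mem_iff hwx.symm).1 ⟨hx, hw⟩) hwx hwy hYx hYy hg
  have hy : y ∉ G.ends g := fun hy => hG.notMem_closure_insert heG (hxy.trans Sym2.eq_swap)
    hne.symm hg'.1 ((Sym2.mem_and_mem_iff hwy.symm).1 ⟨hy, hw⟩) hwy hwx hYy hYx hg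
  refine .inl ⟨hg', fun z hz hzx => ?_⟩
  obtain ⟨w', hw', rfl⟩ := Sym2.mem_map.1 hz
  by_cases hw'y : w' = y
  · exact hy (hw'y ▸ hw')
  · rw [mem_singleton_iff, if_neg hw'y] at hzx
    exact hx (hzx ▸ hw')

lemma WeakFramework.rank_componentOf_contractEdge_le (hG : WeakFramework G M) {r : α}
    (hr : r ∈ (G.contractEdge e x y heG hxy hne).V) :
    rank (M ／ {e}) ((G.contractEdge e x y heG hxy hne).componentOf r).E ≤
      ((G.contractEdge e x y heG hxy hne).componentOf r).V.ncard := by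
  set H := (G.contractEdge e x y heG hxy hne).componentOf r
  have hHV : H.V ⊆ (G.componentOf r).V := Graph.componentOf_V_subset sdiff_subset
    fun _ _ => Graph.reach_of_contractEdge_adj heG hxy hne
  have hHE : ∀ f ∈ H.E, ∀ w ∈ G.ends f, (if w = y then x else w) ∈ H.V := fun f hf w hw =>
    (Graph.componentOf_E_subset_edgesIn hf).2 _ (Sym2.mem_map.2 ⟨w, hw, rfl⟩)
  by_cases hxH : x ∈ H.V
  · have hyK : y ∈ (G.componentOf r).V :=
      ⟨G.ends_mem heG (hxy ▸ Sym2.mem_mk_right x y), (hHV hxH).2.tail ⟨e, heG, hxy⟩⟩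
    refine hG.rank_contractElem_le_ncard (hG.isNonloop_of_ends heG hxy hne.symm)
      (fun h => h.1.2 rfl) (.inr ⟨hr, .refl⟩) (insert_subset hyK hHV) ?_
    rintro f (rfl | hf)
    · refine ⟨heG, fun w hw => ?_⟩
      rw [hxy, Sym2.mem_iff] at hw
      rcases hw with rfl | rfl
      exacts [.inr hxH, .inl rfl]
    · refine ⟨hf.1.1, fun w hw => (eq_or_ne w y).imp id fun hwy => ?_⟩
      simpa only [if_neg hwy] using hHE f hf w hw
  · refine hG.rank_le_ncard_of_subset_edgesIn (fun _ => Indep.of_contract) ⟨hr, .refl⟩ hHV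
      fun f hf => ⟨hf.1.1, fun w hw => ?_⟩
    by_cases hwy : w = y
    · simpa only [if_pos hwy, hxH] using hHE f hf w hw
    · simpa only [if_neg hwy] using hHE f hf w hw

lemma WeakFramework.contractEdge (hG : WeakFramework G M) :
    WeakFramework (G.contractEdge e x y heG hxy hne) (M ／ {e}) := by
  refine ⟨congrArg (· \ ({e} : Set β)) hG.1, fun H ⟨r, hr, hH⟩ => ?_, fun v hv => ?_⟩
  · exact hH ▸ hG.rank_componentOf_contractEdge_le heG hxy hne hr
  rw [contract_closure_eq]
  by_cases hvx : v = x
  · subst hvx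
    exact hG.closure_contractEdge_deleteVertex_subset heG hxy hne
  have hvy : v ≠ y := hv.2
  refine hG.closure_union_singleton_subset rfl heG hv.1 ?_ (fun f _ => ?_) (fun f _ hf => ?_)
  · rw [hxy, Sym2.mem_iff]
    rintro (h | h)
    exacts [hvx h, hvy h]
  · refine ⟨fun h => ?_, fun h => Sym2.mem_map.2 ⟨v, h, if_neg hvy⟩⟩
    obtain ⟨w, hw, hwv⟩ := Sym2.mem_map.1 h
    by_cases hwy : w = y
    · rw [if_pos hwy] at hwv
      exact absurd hwv.symm hvx
    · rwa [← hwv, if_neg hwy]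
  · show (G.ends f).map _ = _
    rw [hf]
    exact map_eq_diag_of_forall_mem fun w hw => by rw [mem_diag_iff.1 hw, if_neg hvy]

lemma Framework.contractEdge (hG : Framework G M) :
    Framework (G.contractEdge e x y heG hxy hne) (M ／ {e}) := by
  refine ⟨hG.1.contractEdge heG hxy hne, fun C hC => ?_⟩
  have hC := isCircuit_iff_isCircuit.1 hC
  obtain ⟨C', hC', hCC', hC'C⟩ := hC.exists_subset_isCircuit_of_contract
  refine (hG.2 C' (isCircuit_iff_isCircuit.2 hC')).of_map (fun w => if w = y then x else w) ?_ ?_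
  · rintro u ⟨f, ⟨hfC, hfE⟩, hu⟩
    obtain ⟨w, hw, rfl⟩ := Sym2.mem_map.1 hu
    exact ⟨w, ⟨f, ⟨hCC' hfC, hfE.1⟩, hw⟩, rfl⟩
  · rintro a b ⟨f, ⟨hfC', hfG⟩, hends⟩
    have hends : G.ends f = s(a, b) := hends
    rcases hC'C hfC' with hfC | hfe
    · refine .single ⟨f, ⟨hfC, hfG, (hC.subset_ground hfC).2⟩, ?_⟩
      show (G.ends f).map _ = _
      rw [hends, Sym2.map_mk]
    · rw [mem_singleton_iff.1 hfe] at hends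
      rw [Graph.ite_eq_of_mem_ends hxy hne (hends ▸ Sym2.mem_mk_left a b),
        Graph.ite_eq_of_mem_ends hxy hne (hends ▸ Sym2.mem_mk_right a b)]

end ContractEdge

section Circ

variable {α : Type u} {β : Type v} {G : Graph α β} {M : Matroid β} {e f : β} {u v : α}
  {hno : ∀ f ∈ G.E, G.ends f = Sym2.diag v → f = e}

lemma Graph.circ_ends_of_mem (hf : f ∈ G.E) (hfe : f ≠ e) (hvf : v ∈ G.ends f) :
    (G.circ e v hno).ends f = Sym2.diag (Sym2.Mem.other hvf) :=
  dif_pos ⟨hf, hfe, hvf⟩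

lemma Graph.circ_ends_of_notMem (hvf : v ∉ G.ends f) : (G.circ e v hno).ends f = G.ends f :=
  dif_neg fun h => hvf h.2.2

lemma Graph.mem_circ_ends_iff (hf : f ∈ G.E) (hfe : f ≠ e) (huv : u ≠ v) :
    u ∈ (G.circ e v hno).ends f ↔ u ∈ G.ends f := by
  by_cases hvf : v ∈ G.ends f
  · rw [Graph.circ_ends_of_mem hf hfe hvf, mem_diag_iff]
    exact ⟨fun h => h ▸ Sym2.other_mem hvf, fun h => eq_other_of_mem hvf h huv⟩
  · rw [Graph.circ_ends_of_notMem hvf]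

lemma Graph.reach_of_circ_adj {a b : α} (h : (G.circ e v hno).Adj a b) :
    Relation.ReflTransGen G.Adj a b := by
  obtain ⟨f, hf, hends⟩ := h
  by_cases hvf : v ∈ G.ends f
  · rw [Graph.circ_ends_of_mem hf.1 hf.2 hvf] at hends
    exact eq_of_mk_eq_diag hends.symm ▸ .refl
  · rw [Graph.circ_ends_of_notMem hvf] at hends
    exact .single ⟨f, hf.1, hends⟩

lemma WeakFramework.rank_componentOf_circ_le (hG : WeakFramework G M) (hloop : G.IsLoopAt e v)
    (he : M.IsNonloop e) {r : α} (hr : r ∈ (G.circ e v hno).V) :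
    rank (M ／ {e}) ((G.circ e v hno).componentOf r).E ≤
      ((G.circ e v hno).componentOf r).V.ncard := by
  set H := (G.circ e v hno).componentOf r
  have hHV : H.V ⊆ (G.componentOf r).V :=
    Graph.componentOf_V_subset sdiff_subset fun _ _ => Graph.reach_of_circ_adj
  have hHE : ∀ f ∈ H.E, ∀ w ∈ G.ends f, w ≠ v → w ∈ H.V := fun f hf w hw hwv =>
    (Graph.componentOf_E_subset_edgesIn hf).2 w ((Graph.mem_circ_ends_iff hf.1.1 hf.1.2 hwv).2 hw)
  by_cases hvH : ∃ f ∈ H.E, v ∈ G.ends f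
  · obtain ⟨f, hf, hvf⟩ := hvH
    have hwv : Sym2.Mem.other hvf ≠ v := fun h =>
      hf.1.2 (hno f hf.1.1 (by rw [← Sym2.other_spec hvf, h]; rfl))
    have hvK : v ∈ (G.componentOf r).V :=
      ⟨G.ends_mem hf.1.1 hvf, (hHV (hHE f hf _ (Sym2.other_mem hvf) hwv)).2.tail
        ⟨f, hf.1.1, (Sym2.other_spec hvf).symm.trans Sym2.eq_swap⟩⟩
    refine hG.rank_contractElem_le_ncard he (fun h => h.1.2 rfl) (.inr ⟨hr, .refl⟩)
      (insert_subset hvK hHV) ?_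
    rintro g (rfl | hg)
    · refine ⟨hloop.1, fun w hw => .inl ?_⟩
      rwa [hloop.2, mem_diag_iff] at hw
    · exact ⟨hg.1.1, fun w hw => (eq_or_ne w v).imp id (hHE g hg w hw)⟩
  · push Not at hvH
    exact hG.rank_le_ncard_of_subset_edgesIn (fun _ => Indep.of_contract) ⟨hr, .refl⟩ hHV
      fun f hf => ⟨hf.1.1, fun w hw => hHE f hf w hw fun h => hvH f hf (h ▸ hw)⟩

lemma WeakFramework.circ (hG : WeakFramework G M) (hloop : G.IsLoopAt e v)
    (he : M.IsNonloop e) : WeakFramework (G.circ e v hno) (M ／ {e}) := by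
  refine ⟨congrArg (· \ ({e} : Set β)) hG.1, fun H ⟨r, hr, hH⟩ => ?_, fun u hu => ?_⟩
  · exact hH ▸ hG.rank_componentOf_circ_le hloop he hr
  have huv : u ≠ v := hu.2
  rw [contract_closure_eq]
  refine hG.closure_union_singleton_subset rfl hloop.1 hu.1 ?_
    (fun f hf => Graph.mem_circ_ends_iff hf.1 hf.2 huv) fun f _ hfu => ?_
  · rw [hloop.2, mem_diag_iff]
    exact huv
  · rw [Graph.circ_ends_of_notMem, hfu]
    rw [hfu, mem_diag_iff]
    exact huv.symm

/-- Peeling `V₁` off `C + e` leaves the set `(C - C₁) + e`, which is independent. -/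
lemma WeakFramework.ncard_lt_ncard_of_isCircuit_contractElem (hG : WeakFramework G M)
    (hloop : G.IsLoopAt e v) (he : M.IsNonloop e) {C C₁ : Set β} (hC : (M ／ {e}).IsCircuit C)
    (hC₁C : C₁ ⊆ C) (hC₁ : C₁.Nonempty) {V₁ : Set α} (hvV₁ : v ∉ V₁)
    (hCV₁ : ∀ f ∈ C \ C₁, ∀ x ∈ G.ends f, x ∉ V₁)
    (hreach : ∀ z ∈ V₁, Relation.ReflTransGen (G.restrictEdges C).Adj z v) :
    V₁.ncard < C₁.ncard := by
  have hCE : C ⊆ G.E \ {e} := hG.1 ▸ hC.subset_ground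
  have hCfin : C.Finite := G.finE.subset fun f hf => (hCE hf).1
  have heC : e ∉ C := fun h => (hCE h).2 rfl
  have hpeel := hG.rank_inter_edgesIn_compl_add_ncard_le (Y := insert e C) (U := V₁)
    (insert_subset hloop.1 fun f hf => (hCE hf).1) fun z hz =>
      ⟨v, hvV₁, Graph.reach_restrictEdges_mono (subset_insert e C) (hreach z hz)⟩
  have hsub : insert e (C \ C₁) ⊆ insert e C ∩ G.edgesIn V₁ᶜ := by
    refine insert_subset ⟨mem_insert e C, hloop.1, fun x hx hxV => hvV₁ ?_⟩
      fun f hf => ⟨.inr hf.1, (hCE hf.1).1, hCV₁ f hf⟩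
    rw [hloop.2, mem_diag_iff] at hx
    exact hx ▸ hxV
  have hind : M.Indep (insert e (C \ C₁)) := (he.contractElem_indep_iff.1
    (hC.ssubset_indep (sdiff_ssubset_left_iff.2 (hC₁.mono (subset_inter hC₁C subset_rfl))))).2
  have hlower := ncard_le_rank ((hCfin.insert e).subset inter_subset_left) hind hsub
  have hdep := rank_lt_ncard (M := M) (hCfin.insert e)
    fun h => hC.not_indep (he.contractElem_indep_iff.2 ⟨heC, h⟩)
  rw [ncard_insert_of_notMem (fun h => heC h.1) (hCfin.subset sdiff_subset)] at hlower
  rw [ncard_insert_of_notMem heC hCfin] at hdep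
  have := ncard_sdiff hC₁C (hCfin.subset hC₁C)
  have := ncard_le_ncard hC₁C hCfin
  omega

/-- If `C₁ ≠ C`, then `C₁` is independent in `M ／ e` and `C₁ + e` lies on `V₁ + v`, so
`|C₁| ≤ |V₁|`, against the peeling bound. -/
lemma WeakFramework.eq_of_isCircuit_contractElem (hG : WeakFramework G M) (hloop : G.IsLoopAt e v)
    (he : M.IsNonloop e) {C C₁ : Set β} (hC : (M ／ {e}).IsCircuit C) (hC₁C : C₁ ⊆ C)
    (hC₁ : C₁.Nonempty) {V₁ : Set α} (hvV₁ : v ∉ V₁)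
    (hC₁V₁ : C₁ ⊆ G.edgesIn (insert v V₁)) (hCV₁ : ∀ f ∈ C \ C₁, ∀ x ∈ G.ends f, x ∉ V₁)
    (hreach : ∀ z ∈ V₁, Relation.ReflTransGen (G.restrictEdges C₁).Adj z v) : C₁ = C := by
  by_contra hne
  have hvK : insert v V₁ ⊆ (G.componentOf v).V := by
    refine insert_subset ⟨G.ends_mem hloop.1 (hloop.2 ▸ Sym2.mem_mk_left v v), .refl⟩
      fun z hz => ⟨?_, Graph.reach_symm (Graph.reach_of_reach_restrictEdges (hreach z hz))⟩
    exact G.restrictEdges_V_subset C₁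
      (Graph.mem_V_of_reach_of_ne (hreach z hz) fun h => hvV₁ (h ▸ hz))
  have heC₁ : insert e C₁ ⊆ G.edgesIn (insert v V₁) := by
    refine insert_subset ⟨hloop.1, fun x hx => .inl ?_⟩ hC₁V₁
    rwa [hloop.2, mem_diag_iff] at hx
  have hupper := hG.rank_contractElem_le_ncard he hvV₁ (mem_insert v V₁) hvK heC₁
  rw [rank_eq_ncard_of_indep (hC.ssubset_indep (hC₁C.ssubset_of_ne hne))] at hupper
  exact (hupper.trans_lt (hG.ncard_lt_ncard_of_isCircuit_contractElem hloop he hC hC₁C hC₁ hvV₁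
    hCV₁ fun z hz => Graph.reach_restrictEdges_mono hC₁C (hreach z hz))).false

/-- The edges at `v` are loops in `G ∘ e`, so a path of `(G ∘ e)[C]` never uses them. -/
lemma Graph.reach_restrictEdges_of_reach_circ {C : Set β} {a b : α}
    (h : Relation.ReflTransGen ((G.circ e v hno).restrictEdges C).Adj a b) :
    Relation.ReflTransGen (G.restrictEdges {f ∈ C | ∀ z ∈ (G.circ e v hno).ends f,
      Relation.ReflTransGen ((G.circ e v hno).restrictEdges C).Adj a z}).Adj a b := by
  induction h with
  | refl => exact .refl
  | @tail b c hb hbc ih =>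
    obtain ⟨f, ⟨hfC, hfG'⟩, hends⟩ := hbc
    have hends : (G.circ e v hno).ends f = s(b, c) := hends
    by_cases hvf : v ∈ G.ends f
    · rw [Graph.circ_ends_of_mem hfG'.1 hfG'.2 hvf] at hends
      exact eq_of_mk_eq_diag hends.symm ▸ ih
    refine ih.tail ⟨f, ⟨⟨hfC, fun z hz => ?_⟩, hfG'.1⟩, ?_⟩
    · rw [hends, Sym2.mem_iff] at hz
      rcases hz with rfl | rfl
      exacts [hb, hb.tail ⟨f, ⟨hfC, hfG'⟩, hends⟩]
    · rwa [Graph.circ_ends_of_notMem hvf] at hends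

lemma WeakFramework.circ_restrictEdges_connected (hG : WeakFramework G M)
    (hloop : G.IsLoopAt e v) (he : M.IsNonloop e) {C : Set β} (hC : (M ／ {e}).IsCircuit C)
    {f₀ : β} (hf₀ : f₀ ∈ C) (hvf₀ : v ∈ G.ends f₀) :
    ((G.circ e v hno).restrictEdges C).Connected := by
  set G' := G.circ e v hno
  set R := G'.restrictEdges C
  have hCE : C ⊆ G.E \ {e} := hG.1 ▸ hC.subset_ground
  set w₀ := Sym2.Mem.other hvf₀
  have hends₀ : G'.ends f₀ = Sym2.diag w₀ :=
    Graph.circ_ends_of_mem (hCE hf₀).1 (hCE hf₀).2 hvf₀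
  have hw₀ : w₀ ∈ R.V := ⟨f₀, ⟨hf₀, hCE hf₀⟩, hends₀ ▸ Sym2.mem_mk_left w₀ w₀⟩
  set V₁ := {z | Relation.ReflTransGen R.Adj w₀ z}
  set C₁ := {f ∈ C | ∀ z ∈ G'.ends f, z ∈ V₁}
  have hvV₁ : v ∉ V₁ := fun h =>
    (G'.restrictEdges_V_subset C (Graph.mem_V_of_reach h hw₀)).2 rfl
  have hf₀C₁ : f₀ ∈ C₁ := ⟨hf₀, fun z hz => by
    rw [hends₀, mem_diag_iff] at hz
    exact hz ▸ .refl⟩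
  have hC₁V₁ : C₁ ⊆ G.edgesIn (insert v V₁) := fun f hf => ⟨(hCE hf.1).1, fun z hz =>
    (eq_or_ne z v).imp id fun hzv =>
      hf.2 z ((Graph.mem_circ_ends_iff (hCE hf.1).1 (hCE hf.1).2 hzv).2 hz)⟩
  have hCV₁ : ∀ f ∈ C \ C₁, ∀ x ∈ G.ends f, x ∉ V₁ := by
    rintro f ⟨hfC, hfC₁⟩ x hx hxV
    have hx' : x ∈ G'.ends f :=
      (Graph.mem_circ_ends_iff (hCE hfC).1 (hCE hfC).2 fun (h : x = v) => hvV₁ (h ▸ hxV)).2 hx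
    exact hfC₁ ⟨hfC, fun z hz => hxV.trans (Graph.reach_of_mem_ends ⟨hfC, hCE hfC⟩ hx' hz)⟩
  have hreach : ∀ z ∈ V₁, Relation.ReflTransGen (G.restrictEdges C₁).Adj v z := fun z hz =>
    .head ⟨f₀, ⟨hf₀C₁, (hCE hf₀).1⟩, (Sym2.other_spec hvf₀).symm⟩
      (Graph.reach_restrictEdges_of_reach_circ hz)
  have hC₁C := hG.eq_of_isCircuit_contractElem hloop he hC (sep_subset C _) ⟨f₀, hf₀C₁⟩ hvV₁ hC₁V₁
    hCV₁ fun z hz => Graph.reach_symm (hreach z hz)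
  have hV : ∀ z ∈ R.V, z ∈ V₁ := by
    rintro z ⟨f, hf, hz⟩
    rw [← hC₁C] at hf
    exact hf.1.2 z hz
  exact fun a ha b hb => (Graph.reach_symm (hV a ha)).trans (hV b hb)

lemma Framework.circ (hG : Framework G M) (hloop : G.IsLoopAt e v) (he : M.IsNonloop e) :
    Framework (G.circ e v hno) (M ／ {e}) := by
  refine ⟨hG.1.circ hloop he, fun C hC => ?_⟩
  have hC := isCircuit_iff_isCircuit.1 hC
  by_cases hv : ∃ f ∈ C, v ∈ G.ends f
  · obtain ⟨f₀, hf₀, hvf₀⟩ := hv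
    exact (hG.1.circ_restrictEdges_connected hloop he hC hf₀ hvf₀).atMostTwoComponents
  push Not at hv
  have hCE : C ⊆ G.E \ {e} := hG.1.1 ▸ hC.subset_ground
  obtain ⟨C', hC', hCC', hC'C⟩ := hC.exists_subset_isCircuit_of_contract
  refine (hG.2 C' (isCircuit_iff_isCircuit.2 hC')).of_map id ?_ ?_
  · rintro u ⟨f, ⟨hfC, hfE⟩, hu⟩
    exact ⟨u, ⟨f, ⟨hCC' hfC, hfE.1⟩, Graph.circ_ends_of_notMem (hv f hfC) ▸ hu⟩, rfl⟩
  · rintro a b ⟨f, ⟨hfC', hfG⟩, hends⟩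
    have hends : G.ends f = s(a, b) := hends
    rcases hC'C hfC' with hfC | hfe
    · exact .single ⟨f, ⟨hfC, hCE hfC⟩,
        (Graph.circ_ends_of_notMem (hno := hno) (hv f hfC)).trans hends⟩
    · rw [mem_singleton_iff.1 hfe, hloop.2] at hends
      exact eq_of_mk_eq_diag hends.symm ▸ .refl

end Circ

theorem statement16_general {α : Type u} {β : Type v} (G : Graph α β) (M : Matroid β)
    (h : Framework G M) (e : β) :
    Framework (G.deleteEdge e) (deleteM M {e}) ∧
    (∀ (x y : α) (heG : e ∈ G.E) (hxy : G.ends e = s(x, y)) (hne : x ≠ y),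
      Framework (G.contractEdge e x y heG hxy hne) (contractM M {e})) ∧
    (∀ (v : α), G.IsLoopAt e v → M.Indep {e} →
      ∀ hno : ∀ f ∈ G.E, G.ends f = Sym2.diag v → f = e,
        Framework (G.circ e v hno) (contractM M {e})) :=
  ⟨h.deleteEdge e, fun _ _ heG hxy hne => h.contractEdge heG hxy hne,
    fun _ hloop he _ => h.circ hloop (indep_singleton.1 he)⟩

/-- Let `G` be a framework for a matroid `M` and let `e ∈ E(M)`. Then
(a) `G − e` is a framework for `M \ e`; (b) if `e` is a non-loop-edge of `G` with
endpoints `x ≠ y`, then `G/e` is a framework for `M/e`; and (c) if `e` is a loop-edge of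
`G` at a vertex `v` with no other loop-edge at `v`, and `e` is not a loop of `M`, then
`G∘e` is a framework for `M/e`. -/
theorem statement16 {α : Type u} {β : Type v} (G : Graph α β) (M : Matroid β)
    (h : Framework G M) (e : β) (he : e ∈ M.E) :
    Framework (G.deleteEdge e) (deleteM M {e}) ∧
    (∀ (x y : α) (heG : e ∈ G.E) (hxy : G.ends e = s(x, y)) (hne : x ≠ y),
      Framework (G.contractEdge e x y heG hxy hne) (contractM M {e})) ∧
    (∀ (v : α), G.IsLoopAt e v → M.Indep {e} →
      ∀ hno : ∀ f ∈ G.E, G.ends f = Sym2.diag v → f = e,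
        Framework (G.circ e v hno) (contractM M {e})) :=
  statement16_general G M h e

end QuasiGraphicPaper
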